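/- arXiv:2108.01792 — 3 statements merged into one kernel-verified Lean document; each statement's English description precedes it below -/
import Mathlib

section
/- Let n be a natural number, let η be the diagonal 4×4 matrix diag(1, −1, −1, −1), and let d : Fin n → Fin n → Fin n → ℝ be symmetric under exchange of its last two indices (d a b c = d a c b). Let A¹, A², A³ : ℝ⁴ → (Fin n → Fin 4 → ℝ) be smooth maps such that A¹ is η-divergence-free: for every a and x, ∑_{μ,ρ} η^{μρ} ∂_ρ A¹_{μ a}(x) = 0. Define Q_μ(x) := ∑_{a,b,c} d_{abc} A¹_{μ a}(x) · ∑_{ν,σ} η^{νσ} A²_{ν b}(x) A³_{σ c}(x). Then for all x, ∑_{a,b,c} d_{abc} ∑_{μ,ρ,ν,σ} η^{μρ} η^{νσ} A¹_{μ a}(x) ( A²_{ν b}(x) ∂_ρ A³_{σ c}(x) + A³_{ν b}(x) ∂_ρ A²_{σ c}(x) ) = ∑_{μ,ρ} η^{μρ} ∂_ρ Q_μ(x), i.e. the symmetric part of the cubic coupling is a total divergence. -/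
/-!
Write `m_{bc} = η(A²_b, A³_c)`. By the Leibniz rule
`∂^μ Q_μ = d_{abc} ((∂^μ A¹_{μa}) m_{bc} + A¹_{μa} ∂^μ m_{bc})`,
and the first term vanishes because `A¹` is divergence-free. In
`∂_ρ m_{bc} = η(∂_ρ A²_b, A³_c) + η(A²_b, ∂_ρ A³_c)` the symmetry of `d_{abc}` in `b, c`
and of `η` lets us replace the first summand by `η(A³_b, ∂_ρ A²_c)`, which turns
`d_{abc} A¹_{μa} ∂^μ m_{bc}` into the coupling.
-/

/-- The Minkowski metric matrix `diag(1, -1, -1, -1)`. -/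
def η (μ ν : Fin 4) : ℝ := if μ = ν then (if μ = 0 then 1 else -1) else 0

/-- Partial derivative in the `ρ`-th coordinate direction of `ℝ⁴`. -/
noncomputable def pd (ρ : Fin 4) (g : (Fin 4 → ℝ) → ℝ) (x : Fin 4 → ℝ) : ℝ :=
  fderiv ℝ g x (Pi.single ρ 1)

theorem η_comm (μ ν : Fin 4) : η μ ν = η ν μ := by
  unfold η
  split_ifs <;> simp_all

theorem Finset.sum_sum_mul_swap_of_symm {ι R : Type*} [Fintype ι] [CommSemiring R]
    {d : ι → ι → R} (hd : ∀ b c, d b c = d c b) (F : ι → ι → R) :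
    ∑ b, ∑ c, d b c * F b c = ∑ b, ∑ c, d b c * F c b := by
  rw [Finset.sum_comm]
  simp_rw [hd]

section Derivative

variable {ρ : Fin 4} {x : Fin 4 → ℝ}

theorem pd_sum {ι : Type*} (s : Finset ι) {f : ι → (Fin 4 → ℝ) → ℝ}
    (hf : ∀ i ∈ s, DifferentiableAt ℝ (f i) x) :
    pd ρ (fun y => ∑ i ∈ s, f i y) x = ∑ i ∈ s, pd ρ (f i) x := by
  simp [pd, fderiv_fun_sum hf]

theorem pd_mul {f g : (Fin 4 → ℝ) → ℝ} (hf : DifferentiableAt ℝ f x)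
    (hg : DifferentiableAt ℝ g x) :
    pd ρ (fun y => f y * g y) x = pd ρ f x * g x + f x * pd ρ g x := by
  simp [pd, fderiv_fun_mul hf hg]
  ring

theorem pd_const (c : ℝ) : pd ρ (fun _ => c) x = 0 := by
  simp [pd]

end Derivative

def minkowskiForm (u v : Fin 4 → ℝ) : ℝ := ∑ ν, ∑ σ, η ν σ * u ν * v σ

namespace minkowskiForm

theorem comm (u v : Fin 4 → ℝ) : minkowskiForm u v = minkowskiForm v u := by
  unfold minkowskiForm
  rw [Finset.sum_comm]
  refine Finset.sum_congr rfl fun ν _ => Finset.sum_congr rfl fun σ _ => ?_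
  rw [η_comm]
  ring

theorem add_right (u v w : Fin 4 → ℝ) :
    minkowskiForm u (fun ρ => v ρ + w ρ) = minkowskiForm u v + minkowskiForm u w := by
  simp only [minkowskiForm, mul_add, Finset.sum_add_distrib]

theorem smul_left (c : ℝ) (u v : Fin 4 → ℝ) :
    minkowskiForm (c • u) v = c * minkowskiForm u v := by
  simp only [minkowskiForm, Finset.mul_sum, Pi.smul_apply, smul_eq_mul]
  refine Finset.sum_congr rfl fun ν _ => Finset.sum_congr rfl fun σ _ => ?_
  ring

theorem nested_eq_sum (w u : Fin 4 → ℝ) (D : Fin 4 → Fin 4 → ℝ) :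
    minkowskiForm w (fun ρ => minkowskiForm u (D ρ)) =
      ∑ μ, ∑ ρ, ∑ ν, ∑ σ, η μ ρ * η ν σ * w μ * (u ν * D ρ σ) := by
  simp only [minkowskiForm, Finset.mul_sum]
  refine Finset.sum_congr rfl fun μ _ => Finset.sum_congr rfl fun ρ _ =>
    Finset.sum_congr rfl fun ν _ => Finset.sum_congr rfl fun σ _ => ?_
  ring

end minkowskiForm

theorem sum_sum_symm_mul_coupling {ι : Type*} [Fintype ι] {d : ι → ι → ℝ}
    (hd : ∀ b c, d b c = d c b) (w : Fin 4 → ℝ) (u v : ι → Fin 4 → ℝ)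
    (Du Dv : Fin 4 → ι → Fin 4 → ℝ) :
    ∑ b, ∑ c, d b c * ∑ μ, ∑ ρ, ∑ ν, ∑ σ,
        η μ ρ * η ν σ * w μ * (u b ν * Dv ρ c σ + v b ν * Du ρ c σ) =
      ∑ b, ∑ c, d b c * minkowskiForm w
        (fun ρ => minkowskiForm (Du ρ b) (v c) + minkowskiForm (u b) (Dv ρ c)) := by
  simp only [mul_add, Finset.sum_add_distrib, ← minkowskiForm.nested_eq_sum,
    minkowskiForm.add_right]
  rw [add_comm, Finset.sum_sum_mul_swap_of_symm hd
    (fun b c => minkowskiForm w fun ρ => minkowskiForm (v b) (Du ρ c))]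
  simp only [minkowskiForm.comm (v _)]

noncomputable def grad (f : (Fin 4 → ℝ) → ℝ) (x : Fin 4 → ℝ) : Fin 4 → ℝ :=
  fun ρ => pd ρ f x

noncomputable def minkowskiDiv (V : (Fin 4 → ℝ) → Fin 4 → ℝ) (x : Fin 4 → ℝ) : ℝ :=
  ∑ μ, ∑ ρ, η μ ρ * pd ρ (fun y => V y μ) x

section Leibniz

variable {x : Fin 4 → ℝ}

theorem DifferentiableAt.minkowskiForm {u v : (Fin 4 → ℝ) → Fin 4 → ℝ}
    (hu : ∀ ν, DifferentiableAt ℝ (fun y => u y ν) x)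
    (hv : ∀ σ, DifferentiableAt ℝ (fun y => v y σ) x) :
    DifferentiableAt ℝ (fun y => minkowskiForm (u y) (v y)) x := by
  unfold _root_.minkowskiForm
  fun_prop

theorem grad_minkowskiForm {u v : (Fin 4 → ℝ) → Fin 4 → ℝ}
    (hu : ∀ ν, DifferentiableAt ℝ (fun y => u y ν) x)
    (hv : ∀ σ, DifferentiableAt ℝ (fun y => v y σ) x) :
    grad (fun y => minkowskiForm (u y) (v y)) x = fun ρ =>
      minkowskiForm (fun ν => pd ρ (fun y => u y ν) x) (v x) +
        minkowskiForm (u x) (fun σ => pd ρ (fun y => v y σ) x) := by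
  funext ρ
  show pd ρ _ x = _
  simp (disch := intros; fun_prop) only [minkowskiForm, pd_sum, pd_mul, pd_const]
  simp only [zero_mul, zero_add, Finset.sum_add_distrib]

theorem minkowskiDiv_sum {ι : Type*} (s : Finset ι) {V : ι → (Fin 4 → ℝ) → Fin 4 → ℝ}
    (hV : ∀ i ∈ s, ∀ μ, DifferentiableAt ℝ (fun y => V i y μ) x) :
    minkowskiDiv (fun y μ => ∑ i ∈ s, V i y μ) x = ∑ i ∈ s, minkowskiDiv (V i) x := by
  simp only [minkowskiDiv, pd_sum s fun i hi => hV i hi _, Finset.mul_sum]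
  simp only [Finset.sum_comm (γ := Fin 4) (α := ι)]

theorem minkowskiDiv_mul {V : (Fin 4 → ℝ) → Fin 4 → ℝ} {f : (Fin 4 → ℝ) → ℝ}
    (hV : ∀ μ, DifferentiableAt ℝ (fun y => V y μ) x) (hf : DifferentiableAt ℝ f x) :
    minkowskiDiv (fun y μ => V y μ * f y) x =
      minkowskiDiv V x * f x + minkowskiForm (V x) (grad f x) := by
  simp only [minkowskiDiv, minkowskiForm, grad, pd_mul (hV _) hf, mul_add, mul_assoc,
    Finset.sum_add_distrib, Finset.sum_mul]

theorem minkowskiDiv_const_mul (c : ℝ) {V : (Fin 4 → ℝ) → Fin 4 → ℝ}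
    (hV : ∀ μ, DifferentiableAt ℝ (fun y => V y μ) x) :
    minkowskiDiv (fun y μ => c * V y μ) x = c * minkowskiDiv V x := by
  simp only [minkowskiDiv, pd_mul (differentiableAt_const c) (hV _), pd_const, zero_mul,
    zero_add, Finset.mul_sum, mul_left_comm]

end Leibniz

/-- the part of the cubic coupling with coefficients `d`
symmetric in the last two colour indices is a total divergence
`∂^μ Q_μ`, where `Q_μ = ∑ d_{abc} A¹_{μ a} η^{νσ} A²_{ν b} A³_{σ c}`. -/
theorem symmetric_part_is_divergence
    (n : ℕ) (d : Fin n → Fin n → Fin n → ℝ)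
    (hd : ∀ a b c, d a b c = d a c b)
    (A1 A2 A3 : (Fin 4 → ℝ) → Fin n → Fin 4 → ℝ)
    (hA1 : ∀ a μ, ContDiff ℝ (⊤ : ℕ∞) fun x => A1 x a μ)
    (hA2 : ∀ a μ, ContDiff ℝ (⊤ : ℕ∞) fun x => A2 x a μ)
    (hA3 : ∀ a μ, ContDiff ℝ (⊤ : ℕ∞) fun x => A3 x a μ)
    (hdivfree : ∀ a x, ∑ μ, ∑ ρ, η μ ρ * pd ρ (fun y => A1 y a μ) x = 0) :
    ∀ x, ∑ a, ∑ b, ∑ c, d a b c *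
        ∑ μ, ∑ ρ, ∑ ν, ∑ σ, η μ ρ * η ν σ * A1 x a μ *
          (A2 x b ν * pd ρ (fun y => A3 y c σ) x
            + A3 x b ν * pd ρ (fun y => A2 y c σ) x)
      = ∑ μ, ∑ ρ, η μ ρ *
          pd ρ (fun y => ∑ a, ∑ b, ∑ c, d a b c * A1 y a μ *
            ∑ ν, ∑ σ, η ν σ * A2 y b ν * A3 y c σ) x := by
  intro x
  have hA1' : ∀ a μ, Differentiable ℝ fun y => A1 y a μ :=
    fun a μ => (hA1 a μ).differentiable (by simp)
  have hA2' : ∀ a μ, Differentiable ℝ fun y => A2 y a μ :=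
    fun a μ => (hA2 a μ).differentiable (by simp)
  have hA3' : ∀ a μ, Differentiable ℝ fun y => A3 y a μ :=
    fun a μ => (hA3 a μ).differentiable (by simp)
  have hm : ∀ b c, DifferentiableAt ℝ (fun y => minkowskiForm (A2 y b) (A3 y c)) x :=
    fun b c => .minkowskiForm (fun ν => by fun_prop) (fun σ => by fun_prop)
  have hQ : ∀ a b c,
      minkowskiDiv (fun y μ => d a b c * A1 y a μ * minkowskiForm (A2 y b) (A3 y c)) x =
        d a b c * minkowskiForm (A1 x a) (grad (fun y => minkowskiForm (A2 y b) (A3 y c)) x) := by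
    intro a b c
    rw [minkowskiDiv_mul (fun μ => by fun_prop) (hm b c),
      minkowskiDiv_const_mul _ fun μ => by fun_prop,
      show minkowskiDiv (fun y μ => A1 y a μ) x = 0 from hdivfree a x,
      mul_zero, zero_mul, zero_add]
    exact minkowskiForm.smul_left _ _ _
  calc _ = ∑ a, ∑ b, ∑ c, d a b c *
        minkowskiForm (A1 x a) (grad (fun y => minkowskiForm (A2 y b) (A3 y c)) x) := by
        refine Finset.sum_congr rfl fun a _ => ?_
        simp (disch := intro; fun_prop) only [grad_minkowskiForm]
        exact sum_sum_symm_mul_coupling (hd a) _ _ _ _ _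
    _ = ∑ a, ∑ b, ∑ c, minkowskiDiv
          (fun y μ => d a b c * A1 y a μ * minkowskiForm (A2 y b) (A3 y c)) x := by
        simp only [hQ]
    _ = minkowskiDiv (fun y μ => ∑ a, ∑ b, ∑ c,
          d a b c * A1 y a μ * minkowskiForm (A2 y b) (A3 y c)) x := by
        simp (disch := intros; fun_prop) only [minkowskiDiv_sum]
end

section
/- Let η be the diagonal 4×4 matrix diag(1, −1, −1, −1). Let F : ℝ⁴ → (Fin 4 → Fin 4 → ℝ) be smooth and compactly supported with F_{μν} = −F_{νμ}, let e ∈ ℝ⁴ be nonzero, and define A_μ(x) := ∫₀^∞ ∑_ν F_{μν}(x + t·e) e_ν dt. Then: (i) ∑_μ e_μ A_μ(x) = 0 for all x; and (ii) if F satisfies the free Maxwell equations ∑_{μ,ρ} η^{μρ} ∂_ρ F_{μν}(x) = 0 for all ν and x, then ∑_{μ,ρ} η^{μρ} ∂_ρ A_μ(x) = 0 for all x. -/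
open MeasureTheory Set

/-! Both identities hold pointwise for the integrand `t ↦ F(x + t e) e` and pass through the
ray integral by linearity: (i) because `e F e = 0` for antisymmetric `F`, (ii) because
`∂^μ (F_{μν} e^ν) = (∂^μ F_{μν}) e^ν`. Differentiating under the integral is legitimate since, for
`y` in a ball, the line `t ↦ y + t e` meets the compact support of `F` only for `|t|` below a
uniform bound, so `‖DF‖` times the indicator of `[-T, T]` dominates the differentiated
integrand. -/

theorem sum_mul_sum_mul_eq_zero_of_antisymm {R ι : Type*} [CommRing R] [IsAddTorsionFree R]
    [Fintype ι] {M : ι → ι → R} (hM : ∀ i j, M i j = -M j i) (v : ι → R) :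
    ∑ i, v i * ∑ j, M i j * v j = 0 := by
  refine self_eq_neg.mp ?_
  calc ∑ i, v i * ∑ j, M i j * v j
      = ∑ i, ∑ j, v i * M i j * v j := by simp only [Finset.mul_sum, mul_assoc]
    _ = ∑ j, ∑ i, v i * M i j * v j := Finset.sum_comm
    _ = ∑ j, ∑ i, -(v j * M j i * v i) :=
        Finset.sum_congr rfl fun j _ => Finset.sum_congr rfl fun i _ => by rw [hM i j]; ring
    _ = -∑ i, v i * ∑ j, M i j * v j := by
        simp only [Finset.sum_neg_distrib, Finset.mul_sum, mul_assoc]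

section StringIntegral

variable {E : Type*} [NormedAddCommGroup E] [NormedSpace ℝ E] {e : E}

theorem exists_abs_le_of_add_smul_mem {B K : Set E} (hB : Bornology.IsBounded B)
    (hK : Bornology.IsBounded K) (he : e ≠ 0) :
    ∃ T, ∀ y ∈ B, ∀ t : ℝ, y + t • e ∈ K → |t| ≤ T := by
  obtain ⟨R, hR⟩ := hB.subset_closedBall 0
  obtain ⟨S, hS⟩ := hK.subset_closedBall 0
  refine ⟨(R + S) / ‖e‖, fun y hy t ht => ?_⟩
  have hy' : ‖y‖ ≤ R := by simpa using hR hy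
  have ht' : ‖y + t • e‖ ≤ S := by simpa using hS ht
  rw [le_div_iff₀ (norm_pos_iff.mpr he), ← Real.norm_eq_abs, ← norm_smul]
  calc ‖t • e‖ = ‖(y + t • e) - y‖ := by rw [add_sub_cancel_left]
    _ ≤ ‖y + t • e‖ + ‖y‖ := norm_sub_le _ _
    _ ≤ R + S := by linarith

theorem HasCompactSupport.comp_add_smul {β : Type*} [Zero β] {g : E → β}
    (hg : HasCompactSupport g) (he : e ≠ 0) (x : E) :
    HasCompactSupport fun t : ℝ => g (x + t • e) := by
  obtain ⟨T, hT⟩ :=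
    exists_abs_le_of_add_smul_mem Bornology.isBounded_singleton hg.isBounded he
  refine HasCompactSupport.intro (isCompact_Icc (a := -T) (b := T)) fun t ht => ?_
  exact image_eq_zero_of_notMem_tsupport fun hmem => ht (abs_le.mp (hT x rfl t hmem))

variable {G : Type*} [NormedAddCommGroup G]

theorem integrableOn_Ioi_comp_add_smul {g : E → G} (hg : Continuous g)
    (hs : HasCompactSupport g) (he : e ≠ 0) (x : E) :
    IntegrableOn (fun t : ℝ => g (x + t • e)) (Ioi 0) :=
  ((hg.comp (by fun_prop)).integrable_of_hasCompactSupport (hs.comp_add_smul he x)).integrableOn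

variable [NormedSpace ℝ G]

variable (e) in
noncomputable def stringIntegral (f : E → G) (x : E) : G :=
  ∫ t in Ioi (0 : ℝ), f (x + t • e)

theorem hasFDerivAt_stringIntegral [CompleteSpace G] {f : E → G} (hf : ContDiff ℝ 1 f)
    (hs : HasCompactSupport f) (he : e ≠ 0) (x : E) :
    HasFDerivAt (stringIntegral e f) (stringIntegral e (fderiv ℝ f) x) x := by
  have hf' : Continuous (fderiv ℝ f) := hf.continuous_fderiv one_ne_zero
  have hs' : HasCompactSupport (fderiv ℝ f) := hs.fderiv (𝕜 := ℝ)
  obtain ⟨C, hC⟩ := hs'.exists_bound_of_continuous hf'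
  obtain ⟨T, hT⟩ :=
    exists_abs_le_of_add_smul_mem (Metric.isBounded_ball (x := x) (r := 1)) hs'.isBounded he
  have hbound : ∀ t, ∀ y ∈ Metric.ball x 1,
      ‖fderiv ℝ f (y + t • e)‖ ≤ (Icc (-T) T).indicator (fun _ => C) t := by
    intro t y hy
    by_cases ht : |t| ≤ T
    · rw [indicator_of_mem (show t ∈ Icc (-T) T from abs_le.mp ht)]
      exact hC _
    · rw [indicator_of_notMem (show t ∉ Icc (-T) T from fun h => ht (abs_le.mpr h)),
        image_eq_zero_of_notMem_tsupport fun h => ht (hT y hy t h), norm_zero]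
  have hbound_int : IntegrableOn ((Icc (-T) T).indicator fun _ => C) (Ioi 0) :=
    ((integrable_indicator_iff measurableSet_Icc).mpr
      (integrableOn_const measure_Icc_lt_top.ne)).integrableOn
  have hderiv : ∀ (t : ℝ) (y : E),
      HasFDerivAt (fun z => f (z + t • e)) (fderiv ℝ f (y + t • e)) y := fun t y => by
    simpa [Function.comp_def] using
      (hf.differentiable one_ne_zero _).hasFDerivAt.comp y ((hasFDerivAt_id y).add_const (t • e))
  have hline : ∀ y : E, Continuous fun t : ℝ => y + t • e := by fun_prop
  exact hasFDerivAt_integral_of_dominated_of_fderiv_le (Metric.ball_mem_nhds x one_pos)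
    (.of_forall fun y => (hf.continuous.comp (hline y)).aestronglyMeasurable)
    (integrableOn_Ioi_comp_add_smul hf.continuous hs he x)
    (hf'.comp (hline x)).aestronglyMeasurable (ae_of_all _ hbound) hbound_int
    (ae_of_all _ fun t y _ => hderiv t y)

theorem fderiv_stringIntegral_apply [CompleteSpace G] {f : E → G} (hf : ContDiff ℝ 1 f)
    (hs : HasCompactSupport f) (he : e ≠ 0) (x v : E) :
    fderiv ℝ (stringIntegral e f) x v = stringIntegral e (fderiv ℝ f · v) x := by
  rw [(hasFDerivAt_stringIntegral hf hs he x).fderiv]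
  exact ContinuousLinearMap.integral_apply
    (integrableOn_Ioi_comp_add_smul (hf.continuous_fderiv one_ne_zero) (hs.fderiv (𝕜 := ℝ))
      he x) v

theorem sum_mul_stringIntegral {ι : Type*} (s : Finset ι) (c : ι → ℝ) {f : ι → E → ℝ}
    (hf : ∀ i ∈ s, Continuous (f i)) (hs : ∀ i ∈ s, HasCompactSupport (f i)) (he : e ≠ 0)
    (x : E) :
    ∑ i ∈ s, c i * stringIntegral e (f i) x =
      stringIntegral e (fun y => ∑ i ∈ s, c i * f i y) x := by
  simp only [stringIntegral, ← integral_const_mul]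
  exact (integral_finsetSum s fun i hi =>
    (integrableOn_Ioi_comp_add_smul (hf i hi) (hs i hi) he x).const_mul (c i)).symm

end StringIntegral

theorem pd_stringIntegral {e : Fin 4 → ℝ} {f : (Fin 4 → ℝ) → ℝ} (hf : ContDiff ℝ 1 f)
    (hs : HasCompactSupport f) (he : e ≠ 0) (ρ : Fin 4) (x : Fin 4 → ℝ) :
    pd ρ (stringIntegral e f) x = stringIntegral e (pd ρ f) x :=
  fderiv_stringIntegral_apply hf hs he x _

theorem ContDiff.continuous_pd {f : (Fin 4 → ℝ) → ℝ} (hf : ContDiff ℝ 1 f) (ρ : Fin 4) :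
    Continuous (pd ρ f) :=
  (hf.continuous_fderiv one_ne_zero).clm_apply continuous_const

theorem HasCompactSupport.pd {f : (Fin 4 → ℝ) → ℝ} (hf : HasCompactSupport f) (ρ : Fin 4) :
    HasCompactSupport (pd ρ f) :=
  hf.fderiv_apply (𝕜 := ℝ) _

theorem pd_sum_mul_const {ι : Type*} (s : Finset ι) {f : ι → (Fin 4 → ℝ) → ℝ} (c : ι → ℝ)
    (ρ : Fin 4) {x : Fin 4 → ℝ} (hf : ∀ i ∈ s, DifferentiableAt ℝ (f i) x) :
    pd ρ (fun y => ∑ i ∈ s, f i y * c i) x = ∑ i ∈ s, pd ρ (f i) x * c i := by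
  simp only [pd, fderiv_fun_sum fun i hi => (hf i hi).mul_const (c i),
    FunLike.coe_sum, Finset.sum_apply]
  refine Finset.sum_congr rfl fun i hi => ?_
  simp [fderiv_mul_const (hf i hi), mul_comm]

theorem sum_η_mul_pd_sum_mul_eq_zero {F : (Fin 4 → ℝ) → Fin 4 → Fin 4 → ℝ} (e : Fin 4 → ℝ)
    {y : Fin 4 → ℝ} (hF : ∀ μ ν, DifferentiableAt ℝ (F · μ ν) y)
    (hMaxwell : ∀ ν, ∑ μ, ∑ ρ, η μ ρ * pd ρ (F · μ ν) y = 0) :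
    ∑ μ, ∑ ρ, η μ ρ * pd ρ (fun z => ∑ ν, F z μ ν * e ν) y = 0 := by
  simp only [pd_sum_mul_const _ _ _ fun ν _ => hF _ ν]
  calc ∑ μ, ∑ ρ, η μ ρ * ∑ ν, pd ρ (F · μ ν) y * e ν
      = ∑ ν, (∑ μ, ∑ ρ, η μ ρ * pd ρ (F · μ ν) y) * e ν := by
        simp only [Finset.mul_sum, Finset.sum_mul, mul_assoc]
        exact (Finset.sum_congr rfl fun _ _ => Finset.sum_comm).trans Finset.sum_comm
    _ = 0 := by simp [hMaxwell]

/-- transversality of the string-localized potential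
`A_μ(x) = ∫₀^∞ ∑_ν F_{μν}(x + t e) e_ν dt`:
(i) `∑_μ e_μ A_μ(x) = 0`; and (ii) if `F` satisfies the free Maxwell
equations `∑_{μ,ρ} η^{μρ} ∂_ρ F_{μν} = 0`, then
`∑_{μ,ρ} η^{μρ} ∂_ρ A_μ = 0`. -/
theorem string_potential_transversality
    (F : (Fin 4 → ℝ) → Fin 4 → Fin 4 → ℝ)
    (hF : ContDiff ℝ (⊤ : ℕ∞) F) (hsupp : HasCompactSupport F)
    (hanti : ∀ x μ ν, F x μ ν = - F x ν μ)
    (e : Fin 4 → ℝ) (he : e ≠ 0)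
    (A : Fin 4 → (Fin 4 → ℝ) → ℝ)
    (hA : ∀ μ x, A μ x = ∫ t in Ioi (0:ℝ), ∑ ν, F (x + t • e) μ ν * e ν) :
    (∀ x, ∑ μ, e μ * A μ x = 0) ∧
    ((∀ ν x, ∑ μ, ∑ ρ, η μ ρ * pd ρ (fun y => F y μ ν) x = 0) →
      ∀ x, ∑ μ, ∑ ρ, η μ ρ * pd ρ (A μ) x = 0) := by
  set g : Fin 4 → (Fin 4 → ℝ) → ℝ := fun μ y => ∑ ν, F y μ ν * e ν
  obtain rfl : A = fun μ => stringIntegral e (g μ) := funext fun μ => funext (hA μ)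
  have hFc : ∀ μ ν, ContDiff ℝ 1 (F · μ ν) := fun μ ν =>
    (contDiff_pi.mp (contDiff_pi.mp hF μ) ν).of_le (by simp)
  have hgc : ∀ μ, ContDiff ℝ 1 (g μ) := fun μ =>
    ContDiff.sum fun ν _ => (hFc μ ν).mul contDiff_const
  have hgs : ∀ μ, HasCompactSupport (g μ) := fun μ =>
    hsupp.comp_left (g := fun m : Fin 4 → Fin 4 → ℝ => ∑ ν, m μ ν * e ν) (by simp)
  refine ⟨fun x => ?_, fun hMaxwell x => ?_⟩
  · rw [sum_mul_stringIntegral _ _ (fun μ _ => (hgc μ).continuous) (fun μ _ => hgs μ) he]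
    simp [g, stringIntegral, sum_mul_sum_mul_eq_zero_of_antisymm (hanti _)]
  · have hdiv : ∀ y, ∑ μ, ∑ ρ, η μ ρ * pd ρ (g μ) y = 0 := fun y =>
      sum_η_mul_pd_sum_mul_eq_zero e (fun μ ν => (hFc μ ν).differentiable one_ne_zero y)
        (hMaxwell · y)
    simp only [pd_stringIntegral (hgc _) (hgs _) he]
    rw [← Fintype.sum_prod_type' (fun μ ρ => η μ ρ * stringIntegral e (pd ρ (g μ)) x),
      sum_mul_stringIntegral Finset.univ _ (f := fun p : Fin 4 × Fin 4 => pd p.2 (g p.1))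
        (fun p _ => (hgc p.1).continuous_pd p.2) (fun p _ => (hgs p.1).pd p.2) he]
    simp [Fintype.sum_prod_type, hdiv, stringIntegral]
end

section
/- Let η_{μν} be the entries of the diagonal 4×4 matrix diag(1, −1, −1, −1), and let η(u,v) := ∑_{μ,ν} η^{μν} u_μ v_ν denote the associated bilinear pairing (η^{μν} = η_{μν}, no complex conjugation). Let p ∈ ℝ⁴, let e⁺, e⁻ ∈ ℂ⁴ be vectors for which there exist c, c' ∈ ℂ⁴ with ∑_{σ ∈ {+,−}} conj(e^σ_μ) e^σ_ν = −η_{μν} + p_μ c_ν + c'_μ p_ν for all μ, ν, and let e' ∈ ℝ⁴ with η(p, e') ≠ 0. Define u^σ_{μν} := i ( e^σ_ν p_μ − e^σ_μ p_ν ) and u^σ_λ := e^σ_λ − p_λ · η(e^σ, e') / η(p, e'). Then for all indices μ, ν, λ: ∑_{σ ∈ {+,−}} conj(u^σ_{μν}) u^σ_λ = i ( p_μ η_{νλ} − p_ν η_{μλ} + p_λ ( p_ν e'_μ − p_μ e'_ν ) / η(p, e') ). -/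
/-- The associated bilinear pairing on `ℂ⁴` (no complex conjugation):
`η(u,v) = ∑_{μ,ν} η^{μν} u_μ v_ν`. -/
noncomputable def ηC (u v : Fin 4 → ℂ) : ℂ := ∑ μ, ∑ ν, (η μ ν : ℂ) * u μ * v ν

/-- The associated bilinear pairing on `ℝ⁴`. -/
def ηR (u v : Fin 4 → ℝ) : ℝ := ∑ μ, ∑ ν, η μ ν * u μ * v ν

/-- given a polarization pair `e = (e⁺, e⁻)` satisfying the
completeness relation, the mixed two-point kernel of the field-strength
intertwiner `u^σ_{μν} = i(e^σ_ν p_μ − e^σ_μ p_ν)` and the string-localized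
potential intertwiner `u^σ_λ = e^σ_λ − p_λ η(e^σ, e')/η(p, e')` is
`∑_σ conj(u^σ_{μν}) u^σ_λ
  = i ( p_μ η_{νλ} − p_ν η_{μλ} + p_λ (p_ν e'_μ − p_μ e'_ν)/η(p,e') )`. -/
theorem mixed_two_point_kernel
    (p e' : Fin 4 → ℝ) (e : Fin 2 → Fin 4 → ℂ)
    (hcomp : ∃ c c' : Fin 4 → ℂ, ∀ μ ν,
      ∑ σ : Fin 2, starRingEnd ℂ (e σ μ) * e σ ν
        = -(η μ ν : ℂ) + (p μ : ℂ) * c ν + c' μ * (p ν : ℂ))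
    (hpe' : ηR p e' ≠ 0)
    (uF : Fin 2 → Fin 4 → Fin 4 → ℂ)
    (huF : ∀ σ μ ν, uF σ μ ν
      = Complex.I * (e σ ν * (p μ : ℂ) - e σ μ * (p ν : ℂ)))
    (uA : Fin 2 → Fin 4 → ℂ)
    (huA : ∀ σ lam, uA σ lam
      = e σ lam - (p lam : ℂ) * ηC (e σ) (fun ν => (e' ν : ℂ)) / (ηR p e' : ℂ)) :
    ∀ μ ν lam,
      ∑ σ : Fin 2, starRingEnd ℂ (uF σ μ ν) * uA σ lam
        = Complex.I * ((p μ : ℂ) * (η ν lam : ℂ) - (p ν : ℂ) * (η μ lam : ℂ)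
            + (p lam : ℂ) * ((p ν : ℂ) * (e' μ : ℂ) - (p μ : ℂ) * (e' ν : ℂ))
              / (ηR p e' : ℂ)) := by
  obtain ⟨c, c', hc⟩ := hcomp
  have L : ∀ ν, ∑ σ : Fin 2, starRingEnd ℂ (e σ ν) * ηC (e σ) (fun β => (e' β : ℂ))
      = -(e' ν : ℂ) + (p ν : ℂ) * ηC c (fun β => (e' β : ℂ)) + c' ν * (ηR p e' : ℂ) := by
    intro ν
    have h0 := hc ν 0; have h1 := hc ν 1; have h2 := hc ν 2; have h3 := hc ν 3
    simp only [ηC, ηR, η, Fin.sum_univ_four, Fin.sum_univ_two] at *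
    fin_cases ν <;> norm_num at * <;> push_cast at * <;>
      linear_combination (e' 0 : ℂ) * h0 - (e' 1 : ℂ) * h1 - (e' 2 : ℂ) * h2 - (e' 3 : ℂ) * h3
  intro μ ν lam
  have hP : ((ηR p e' : ℝ) : ℂ) ≠ 0 := by exact_mod_cast hpe'
  have hPinv := mul_inv_cancel₀ hP
  have h1 := hc ν lam
  have h2 := hc μ lam
  have L1 := L ν
  have L2 := L μ
  simp only [huF, huA, Fin.sum_univ_two, map_mul, map_sub, Complex.conj_I,
    Complex.conj_ofReal] at h1 h2 L1 L2 ⊢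
  linear_combination (-Complex.I * (p μ : ℂ)) * h1
    + (Complex.I * (p ν : ℂ)) * h2
    + (Complex.I * (p lam : ℂ) * (p μ : ℂ) * ((ηR p e' : ℝ) : ℂ)⁻¹) * L1
    + (-Complex.I * (p lam : ℂ) * (p ν : ℂ) * ((ηR p e' : ℝ) : ℂ)⁻¹) * L2
    + (Complex.I * (p lam : ℂ) * ((p μ : ℂ) * c' ν - (p ν : ℂ) * c' μ)) * hPinv
end
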